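/- Let T be a weak mixing measure-preserving invertible transformation of a probability space and let (s_{n,i})_{(r_n)} be a dynamical sequence of integers that for each n takes each integer value at most once and has positive lower density (liminf_n r_n/s̃_n > 0, where s̃_n = max_i s_{n,i} − min_i s_{n,i}). Then (s_{n,i})_{(r_n)} is weak mixing with respect to T: for every sequence of measurable sets (A_n) and every measurable set B, (1/r_n)∑_{i<r_n} |μ(T^{s_{n,i}}(A_n) ∩ B) − μ(A_n)μ(B)| → 0. -/

import Mathlib

open MeasureTheory Filter Finset

/-- Integer iterate of an invertible transformation. -/
noncomputable def iterZ {X : Type*} [MeasurableSpace X] (T : X ≃ᵐ X) (k : ℤ) : X → X :=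
  if 0 ≤ k then (⇑T)^[k.toNat] else (⇑T.symm)^[(-k).toNat]

/-!
Shift the `n`-th block of times by its minimum `m n`, i.e. replace `A n` by `T^{m n}(A n)`,
which has the same measure. The shifted times are distinct points of the interval
`[0, M n - m n]`, whose length is comparable to `r n` by the density assumption. Hence the
average along the block is at most a constant times the average over the whole interval, and
the latter tends to zero by weak mixing: the weak mixing averages tend to zero uniformly in
the sets, so they may be taken along any lengths tending to infinity.
-/

section iterZ

variable {X : Type*} [MeasurableSpace X] (T : X ≃ᵐ X)

theorem iterZ_eq_zpow (k : ℤ) : iterZ T k = ⇑(T.toEquiv ^ k) := by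
  unfold iterZ
  split_ifs with h
  · lift k to ℕ using h
    rw [zpow_natCast, Equiv.Perm.coe_pow]
    rfl
  · obtain ⟨n, rfl⟩ : ∃ n : ℕ, k = -n := ⟨(-k).toNat, by omega⟩
    rw [zpow_neg, zpow_natCast, ← inv_pow, Equiv.Perm.coe_pow]
    simp only [neg_neg, Int.toNat_natCast]
    rfl

theorem image_iterZ_add (a b : ℤ) (A : Set X) :
    iterZ T (a + b) '' A = iterZ T a '' (iterZ T b '' A) := by
  simp only [iterZ_eq_zpow, zpow_add, Equiv.Perm.coe_mul, Set.image_comp]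

theorem image_iterZ_eq_preimage_neg (k : ℤ) (A : Set X) :
    iterZ T k '' A = iterZ T (-k) ⁻¹' A := by
  simp only [iterZ_eq_zpow, Equiv.image_eq_preimage_symm, zpow_neg]
  rfl

theorem measurable_iterZ (k : ℤ) : Measurable (iterZ T k) := by
  unfold iterZ
  split_ifs
  · exact T.measurable.iterate _
  · exact T.symm.measurable.iterate _

theorem MeasurableSet.image_iterZ (k : ℤ) {A : Set X} (hA : MeasurableSet A) :
    MeasurableSet (iterZ T k '' A) := by
  rw [image_iterZ_eq_preimage_neg]
  exact measurable_iterZ T (-k) hA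

theorem measurePreserving_iterZ {μ : Measure X} (hT : MeasurePreserving T μ μ) (k : ℤ) :
    MeasurePreserving (iterZ T k) μ μ := by
  unfold iterZ
  split_ifs
  · exact hT.iterate _
  · exact (hT.symm T).iterate _

theorem measure_image_iterZ {μ : Measure X} (hT : MeasurePreserving T μ μ) (k : ℤ)
    {A : Set X} (hA : MeasurableSet A) : μ (iterZ T k '' A) = μ A := by
  rw [image_iterZ_eq_preimage_neg]
  exact (measurePreserving_iterZ T hT (-k)).measure_preimage hA.nullMeasurableSet

theorem image_iterZ_toNat_sub_image_iterZ {k m : ℤ} (hmk : m ≤ k) (A : Set X) :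
    iterZ T ((k - m).toNat : ℤ) '' (iterZ T m '' A) = iterZ T k '' A := by
  rw [← image_iterZ_add]
  congr 2
  omega

end iterZ

theorem Filter.Tendsto.comp_atTop_of_forall_seq {α β : Type*} {p : α → Prop} {g : ℕ → α → β}
    {l : Filter β} (h : ∀ A : ℕ → α, (∀ n, p (A n)) → Tendsto (fun n => g n (A n)) atTop l)
    {L : ℕ → ℕ} (hL : Tendsto L atTop atTop) {A : ℕ → α} (hA : ∀ n, p (A n)) :
    Tendsto (fun n => g (L n) (A n)) atTop l := by
  classical
  rw [tendsto_iff_forall_eventually_mem]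
  intro U hU
  by_contra hne
  -- Re-index the points that leave `U` by their times `L n`: this gives a sequence `B`
  -- leaving `U` infinitely often, against `h`.
  let bad : ℕ → Prop := fun k => ∃ n, L n = k ∧ g k (A n) ∉ U
  let B : ℕ → α := fun k => if hk : bad k then A hk.choose else A 0
  have hB : ∀ k, p (B k) := fun k => by
    simp only [B]
    split <;> exact hA _
  have hbad : ∃ᶠ k in atTop, bad k :=
    hL.frequently (Filter.not_eventually.mp hne |>.mono fun n hn => ⟨n, rfl, hn⟩)
  obtain ⟨k, hk, hgood⟩ := (hbad.and_eventually ((h B hB).eventually_mem hU)).exists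
  simp only [B, dif_pos hk] at hgood
  exact hk.choose_spec.2 hgood

theorem avg_comp_le_of_injOn {r L : ℕ} {k : ℕ → ℕ} {f : ℕ → ℝ} (hf : ∀ j, 0 ≤ f j)
    (hmaps : Set.MapsTo k (range r) (range L)) (hinj : Set.InjOn k (range r))
    {c : ℝ} (hc : 0 < c) (hcL : c * L ≤ r) :
    (1 / (r : ℝ)) * ∑ i ∈ range r, f (k i) ≤ c⁻¹ * ((1 / (L : ℝ)) * ∑ j ∈ range L, f j) := by
  have hsum : ∑ i ∈ range r, f (k i) ≤ ∑ j ∈ range L, f j := by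
    rw [← sum_image hinj]
    exact sum_le_sum_of_subset_of_nonneg (image_subset_iff.mpr hmaps) fun j _ _ => hf j
  have hrL : r ≤ L := by simpa using card_le_card_of_injOn k hmaps hinj
  have hinv : 1 / (r : ℝ) ≤ c⁻¹ * (1 / (L : ℝ)) := by
    rcases Nat.eq_zero_or_pos r with hr | hr
    · simp only [hr, Nat.cast_zero, div_zero]
      positivity
    · have hLpos : (0 : ℝ) < c * L := mul_pos hc (by exact_mod_cast hr.trans_le hrL)
      calc 1 / (r : ℝ) ≤ 1 / (c * L) := one_div_le_one_div_of_le hLpos hcL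
        _ = c⁻¹ * (1 / L) := by rw [one_div, mul_inv, one_div]
  calc (1 / (r : ℝ)) * ∑ i ∈ range r, f (k i)
      ≤ c⁻¹ * (1 / (L : ℝ)) * ∑ j ∈ range L, f j :=
        mul_le_mul hinv hsum (sum_nonneg fun i _ => hf _) (by positivity)
    _ = c⁻¹ * ((1 / (L : ℝ)) * ∑ j ∈ range L, f j) := mul_assoc _ _ _

theorem tendsto_zero_avg_comp_of_injOn {r L : ℕ → ℕ} {k : ℕ → ℕ → ℕ} {f : ℕ → ℕ → ℝ}
    (hf : ∀ n j, 0 ≤ f n j) (hmaps : ∀ n, Set.MapsTo (k n) (range (r n)) (range (L n)))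
    (hinj : ∀ n, Set.InjOn (k n) (range (r n)))
    {c : ℝ} (hc : 0 < c) (hcL : ∀ᶠ n in atTop, c * L n ≤ r n)
    (hlim : Tendsto (fun n => (1 / (L n : ℝ)) * ∑ j ∈ range (L n), f n j) atTop (nhds 0)) :
    Tendsto (fun n => (1 / (r n : ℝ)) * ∑ i ∈ range (r n), f n (k n i)) atTop (nhds 0) := by
  have hbound := hlim.const_mul c⁻¹
  rw [mul_zero] at hbound
  refine squeeze_zero' (Eventually.of_forall fun n => ?_) ?_ hbound
  · exact mul_nonneg (by positivity) (sum_nonneg fun i _ => hf n _)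
  · exact hcL.mono fun n hn => avg_comp_le_of_injOn (hf n) (hmaps n) (hinj n) hc hn

theorem exists_pos_mul_toNat_succ_le_of_liminf_pos {r : ℕ → ℕ} {d : ℕ → ℤ}
    (hd : ∀ᶠ n in atTop, 0 ≤ d n)
    (hdens : 0 < liminf (fun n => (r n : ℝ) / (d n : ℝ)) atTop) :
    ∃ c : ℝ, 0 < c ∧ ∀ᶠ n in atTop, c * (((d n).toNat + 1 : ℕ) : ℝ) ≤ r n := by
  obtain ⟨b, hb, hblt⟩ := exists_between hdens
  have hbdd : IsBoundedUnder (· ≥ ·) atTop (fun n => (r n : ℝ) / (d n : ℝ)) :=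
    ⟨0, eventually_map.mpr (hd.mono fun n hn => by positivity)⟩
  refine ⟨b / 2, half_pos hb, ?_⟩
  filter_upwards [hd, eventually_lt_of_lt_liminf hblt hbdd] with n hn hbn
  have hdpos : (0 : ℝ) < d n := by
    rcases hn.lt_or_eq with h | h
    · exact_mod_cast h
    · simp only [← h, Int.cast_zero, div_zero] at hbn
      linarith
  have hcast : (((d n).toNat + 1 : ℕ) : ℝ) = d n + 1 := by
    rw [Nat.cast_succ, ← Int.cast_natCast, Int.toNat_of_nonneg hn]
  have hbd : b * d n < r n := (lt_div_iff₀ hdpos).mp hbn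
  have hd1 : (1 : ℝ) ≤ d n := by
    exact_mod_cast (by exact_mod_cast hdpos : 0 < d n)
  rw [hcast]
  nlinarith

theorem pos_density_injective_dynseq_weak_mixing_general
    {X : Type*} [MeasurableSpace X] (μ : Measure X)
    (T : X ≃ᵐ X) (hT : MeasurePreserving T μ μ)
    (hwm : ∀ A : ℕ → Set X, (∀ n, MeasurableSet (A n)) → ∀ B : Set X, MeasurableSet B →
      Tendsto (fun n : ℕ =>
          (1 / (n : ℝ)) * ∑ i ∈ Finset.range n,
            |(μ (iterZ T (i : ℤ) '' A n ∩ B)).toReal - (μ (A n)).toReal * (μ B).toReal|)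
        atTop (nhds 0))
    (r : ℕ → ℕ) (hrtop : Tendsto r atTop atTop)
    (s : ℕ → ℕ → ℤ)
    (hinj : ∀ n i j, i < r n → j < r n → s n i = s n j → i = j)
    (M m : ℕ → ℤ)
    (hub : ∀ n i, i < r n → m n ≤ s n i ∧ s n i ≤ M n)
    (hdens : 0 < Filter.liminf (fun n : ℕ => (r n : ℝ) / ((M n - m n : ℤ) : ℝ)) atTop) :
    ∀ A : ℕ → Set X, (∀ n, MeasurableSet (A n)) → ∀ B : Set X, MeasurableSet B →
      Tendsto (fun n : ℕ =>
          (1 / (r n : ℝ)) * ∑ i ∈ Finset.range (r n),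
            |(μ (iterZ T (s n i) '' A n ∩ B)).toReal - (μ (A n)).toReal * (μ B).toReal|)
        atTop (nhds 0) := by
  intro A hA B hB
  let L n := (M n - m n).toNat + 1
  let k n i := (s n i - m n).toNat
  have hmaps : ∀ n, Set.MapsTo (k n) (range (r n)) (range (L n)) := fun n i hi => by
    have := hub n i (mem_range.mp hi)
    simp only [coe_range, Set.mem_Iio, k, L] at hi ⊢
    omega
  have hkinj : ∀ n, Set.InjOn (k n) (range (r n)) := fun n i hi j hj hij => by
    simp only [coe_range, Set.mem_Iio] at hi hj
    have := hub n i hi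
    have := hub n j hj
    exact hinj n i j hi hj (by simp only [k] at hij; omega)
  have hL : Tendsto L atTop atTop :=
    tendsto_atTop_mono (fun n => by simpa using card_le_card_of_injOn _ (hmaps n) (hkinj n)) hrtop
  have hmM : ∀ᶠ n in atTop, 0 ≤ M n - m n :=
    (hrtop.eventually_gt_atTop 0).mono fun n hn => by have := hub n 0 hn; omega
  obtain ⟨c, hc, hcL⟩ := exists_pos_mul_toNat_succ_le_of_liminf_pos hmM hdens
  let avg (N : ℕ) (a : Set X) := (1 / (N : ℝ)) * ∑ i ∈ range N,
    |(μ (iterZ T (i : ℤ) '' a ∩ B)).toReal - (μ a).toReal * (μ B).toReal|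
  have hwmL := Tendsto.comp_atTop_of_forall_seq (g := avg) (fun A hA => hwm A hA B hB) hL
    (fun n => (hA n).image_iterZ T (m n))
  refine (tendsto_zero_avg_comp_of_injOn (fun _ _ => abs_nonneg _) hmaps hkinj hc hcL hwmL).congr
    fun n => ?_
  refine congrArg _ (sum_congr rfl fun i hi => ?_)
  rw [image_iterZ_toNat_sub_image_iterZ T (hub n i (mem_range.mp hi)).1,
    measure_image_iterZ T hT (m n) (hA n)]

/-- Let `T` be weak mixing and let `(s_{n,i})` be a dynamical sequence of integers taking
each value at most once for each `n`, with positive lower density `liminf r_n/s̃_n > 0`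
(where `M n` and `m n` are the maximum and minimum of `s n · ` on `[0, r n)`).  Then the
dynamical sequence is weak mixing with respect to `T`. -/
theorem pos_density_injective_dynseq_weak_mixing
    {X : Type*} [MeasurableSpace X] (μ : Measure X) [IsProbabilityMeasure μ]
    (T : X ≃ᵐ X) (hT : MeasurePreserving T μ μ)
    (hwm : ∀ A : ℕ → Set X, (∀ n, MeasurableSet (A n)) → ∀ B : Set X, MeasurableSet B →
      Tendsto (fun n : ℕ =>
          (1 / (n : ℝ)) * ∑ i ∈ Finset.range n,
            |(μ (iterZ T (i : ℤ) '' A n ∩ B)).toReal - (μ (A n)).toReal * (μ B).toReal|)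
        atTop (nhds 0))
    (r : ℕ → ℕ) (hrpos : ∀ n, 0 < r n) (hrtop : Tendsto r atTop atTop)
    (s : ℕ → ℕ → ℤ)
    (hinj : ∀ n i j, i < r n → j < r n → s n i = s n j → i = j)
    (M m : ℕ → ℤ)
    (hub : ∀ n i, i < r n → m n ≤ s n i ∧ s n i ≤ M n)
    (hMmem : ∀ n, ∃ i, i < r n ∧ s n i = M n)
    (hmmem : ∀ n, ∃ i, i < r n ∧ s n i = m n)
    (hdens : 0 < Filter.liminf (fun n : ℕ => (r n : ℝ) / ((M n - m n : ℤ) : ℝ)) atTop) :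
    ∀ A : ℕ → Set X, (∀ n, MeasurableSet (A n)) → ∀ B : Set X, MeasurableSet B →
      Tendsto (fun n : ℕ =>
          (1 / (r n : ℝ)) * ∑ i ∈ Finset.range (r n),
            |(μ (iterZ T (s n i) '' A n ∩ B)).toReal - (μ (A n)).toReal * (μ B).toReal|)
        atTop (nhds 0) :=
  pos_density_injective_dynseq_weak_mixing_general μ T hT hwm r hrtop s hinj M m hub hdens
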